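/- arXiv:0804.0436 — 2 statements merged into one kernel-verified Lean document; each statement's English description precedes it below -/
import Mathlib

section
/- Let 𝔐 = (V,⟨·,·⟩,A) be a spacelike Osserman model of neutral signature (2,2). Then for every positive integer j there is a constant c_j such that Tr((J_A(v))^j) = c_j · ⟨v,v⟩^j for every vector v ∈ V. In particular Tr((J_A(v))^j) = 0 for every null v. -/
open Matrix BigOperators

/-- `V = ℝ⁴`. -/
abbrev V4 : Type := Fin 4 → ℝ

/-- The neutral inner product of signature (2,2):
`⟨x,y⟩ = −x₁y₁ − x₂y₂ + x₃y₃ + x₄y₄`. -/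
def nip (x y : V4) : ℝ := -(x 0 * y 0) - x 1 * y 1 + x 2 * y 2 + x 3 * y 3

/-- The signs `ε₁ = ε₂ = −1`, `ε₃ = ε₄ = 1`. -/
def eps : Fin 4 → ℝ := ![-1, -1, 1, 1]

/-- The standard basis vectors `e i`. -/
def stdb (i : Fin 4) : V4 := fun j => if j = i then 1 else 0

/-- A 4-linear map `A : V⁴ → ℝ` (linearity in each slot). -/
def IsMultilinear (A : V4 → V4 → V4 → V4 → ℝ) : Prop :=
  (∀ (c : ℝ) (x x' y z w : V4), A (c • x + x') y z w = c * A x y z w + A x' y z w) ∧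
  (∀ (c : ℝ) (x y y' z w : V4), A x (c • y + y') z w = c * A x y z w + A x y' z w) ∧
  (∀ (c : ℝ) (x y z z' w : V4), A x y (c • z + z') w = c * A x y z w + A x y z' w) ∧
  (∀ (c : ℝ) (x y z w w' : V4), A x y z (c • w + w') = c * A x y z w + A x y z w')

/-- Curvature symmetries:
`A(x,y,z,v) = −A(y,x,z,v) = A(z,v,x,y)` and the first Bianchi identity. -/
def HasCurvSym (A : V4 → V4 → V4 → V4 → ℝ) : Prop :=
  (∀ x y z w, A x y z w = - A y x z w) ∧
  (∀ x y z w, A x y z w = A z w x y) ∧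
  (∀ x y z w, A x y z w + A y z x w + A z x y w = 0)

/-- An algebraic curvature tensor on `(V,⟨·,·⟩)`. -/
def IsModel (A : V4 → V4 → V4 → V4 → ℝ) : Prop := IsMultilinear A ∧ HasCurvSym A

/-- The Jacobi operator `J_A(x)`, as a matrix: it is the unique linear map with
`⟨J_A(x)y, z⟩ = A(y,x,x,z)`; its matrix entries are `J i j = ε i * A(e j, x, x, e i)`. -/
def jacobi (A : V4 → V4 → V4 → V4 → ℝ) (x : V4) : Matrix (Fin 4) (Fin 4) ℝ :=
  Matrix.of fun i j => eps i * A (stdb j) x x (stdb i)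

/-- Two endomorphisms of `V` are similar (conjugate by an invertible linear map). -/
def Similar4 (M N : Matrix (Fin 4) (Fin 4) ℝ) : Prop :=
  ∃ L : Matrix (Fin 4) (Fin 4) ℝ, IsUnit L.det ∧ M * L = L * N

/-- Spacelike Osserman: the characteristic polynomial of `J_A` is constant on
unit spacelike vectors. -/
def SpacelikeOsserman (A : V4 → V4 → V4 → V4 → ℝ) : Prop :=
  ∀ u w : V4, nip u u = 1 → nip w w = 1 → (jacobi A u).charpoly = (jacobi A w).charpoly

/-- Timelike Osserman: the characteristic polynomial of `J_A` is constant on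
unit timelike vectors. -/
def TimelikeOsserman (A : V4 → V4 → V4 → V4 → ℝ) : Prop :=
  ∀ u w : V4, nip u u = -1 → nip w w = -1 → (jacobi A u).charpoly = (jacobi A w).charpoly

/-- Null Osserman: `J_A(v)` is nilpotent for every null vector `v`. -/
def NullOsserman (A : V4 → V4 → V4 → V4 → ℝ) : Prop :=
  ∀ v : V4, nip v v = 0 → IsNilpotent (jacobi A v)

/-- Spacelike Jordan Osserman: the Jordan normal form of `J_A` is constant on
unit spacelike vectors. -/
def SpacelikeJordanOsserman (A : V4 → V4 → V4 → V4 → ℝ) : Prop :=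
  ∀ u w : V4, nip u u = 1 → nip w w = 1 → Similar4 (jacobi A u) (jacobi A w)

/-- Timelike Jordan Osserman. -/
def TimelikeJordanOsserman (A : V4 → V4 → V4 → V4 → ℝ) : Prop :=
  ∀ u w : V4, nip u u = -1 → nip w w = -1 → Similar4 (jacobi A u) (jacobi A w)

/-- Null Jordan Osserman: the Jordan normal form of `J_A` is constant on
nonzero null vectors. -/
def NullJordanOsserman (A : V4 → V4 → V4 → V4 → ℝ) : Prop :=
  ∀ u w : V4, u ≠ 0 → w ≠ 0 → nip u u = 0 → nip w w = 0 →
    Similar4 (jacobi A u) (jacobi A w)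

/-- The Ricci tensor `ρ_A(x,y) = Σᵢ εᵢ A(eᵢ,x,y,eᵢ)`. -/
def ricci (A : V4 → V4 → V4 → V4 → ℝ) (x y : V4) : ℝ :=
  ∑ i : Fin 4, eps i * A (stdb i) x y (stdb i)

/-- Einstein: `ρ_A = c⟨·,·⟩`. -/
def Einstein (A : V4 → V4 → V4 → V4 → ℝ) : Prop :=
  ∃ c : ℝ, ∀ x y : V4, ricci A x y = c * nip x y

/-- The scalar curvature `τ_A = Σᵢ εᵢ ρ_A(eᵢ,eᵢ)`. -/
def scal (A : V4 → V4 → V4 → V4 → ℝ) : ℝ :=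
  ∑ i : Fin 4, eps i * ricci A (stdb i) (stdb i)

/-- The Weyl tensor. -/
noncomputable def weyl (A : V4 → V4 → V4 → V4 → ℝ) (x y z v : V4) : ℝ :=
  A x y z v + (scal A / 6) * (nip y z * nip x v - nip x z * nip y v)
    - (1/2) * (ricci A y z * nip x v - ricci A x z * nip y v
        + ricci A x v * nip y z - ricci A y v * nip x z)

/-- A 2-vector `x ∧ y`, represented by its antisymmetric coefficient matrix. -/
def wedge (x y : V4) : Matrix (Fin 4) (Fin 4) ℝ :=
  Matrix.of fun i j => x i * y j - x j * y i

/-- The Weyl tensor as a symmetric bilinear form on 2-vectors, determined by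
`W_A(x∧y, z∧v) = W_A(x,y,z,v)`. -/
noncomputable def weylForm (A : V4 → V4 → V4 → V4 → ℝ) (α β : Matrix (Fin 4) (Fin 4) ℝ) : ℝ :=
  (1/4) * ∑ i : Fin 4, ∑ j : Fin 4, ∑ k : Fin 4, ∑ l : Fin 4,
    α i j * β k l * weyl A (stdb i) (stdb j) (stdb k) (stdb l)

/-- `E₁^ε = (1/√2)(e₁∧e₂ + ε e₃∧e₄)`, `E₂^ε = (1/√2)(e₁∧e₃ + ε e₂∧e₄)`,
`E₃^ε = (1/√2)(e₁∧e₄ − ε e₂∧e₃)`.  For `ε = 1` this is the standard basis of the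
self-dual 2-vectors `Λ⁺`; for `ε = −1`, of the anti-self-dual 2-vectors `Λ⁻`. -/
noncomputable def Evec (ε : ℝ) : Fin 3 → Matrix (Fin 4) (Fin 4) ℝ :=
  ![(Real.sqrt 2)⁻¹ • (wedge (stdb 0) (stdb 1) + ε • wedge (stdb 2) (stdb 3)),
    (Real.sqrt 2)⁻¹ • (wedge (stdb 0) (stdb 2) + ε • wedge (stdb 1) (stdb 3)),
    (Real.sqrt 2)⁻¹ • (wedge (stdb 0) (stdb 3) - ε • wedge (stdb 1) (stdb 2))]

/-- The space `Λ⁺` of self-dual 2-vectors. -/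
def LambdaPlus : Submodule ℝ (Matrix (Fin 4) (Fin 4) ℝ) :=
  Submodule.span ℝ (Set.range (Evec 1))

/-- The space `Λ⁻` of anti-self-dual 2-vectors. -/
def LambdaMinus : Submodule ℝ (Matrix (Fin 4) (Fin 4) ℝ) :=
  Submodule.span ℝ (Set.range (Evec (-1)))

/-- Self-dual: the Weyl form vanishes identically on `Λ⁻`. -/
def SelfDual (A : V4 → V4 → V4 → V4 → ℝ) : Prop :=
  ∀ α ∈ LambdaMinus, ∀ β ∈ LambdaMinus, weylForm A α β = 0

/-- Anti-self-dual: the Weyl form vanishes identically on `Λ⁺`. -/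
def AntiSelfDual (A : V4 → V4 → V4 → V4 → ℝ) : Prop :=
  ∀ α ∈ LambdaPlus, ∀ β ∈ LambdaPlus, weylForm A α β = 0

/-- The curvature tensor `A⁰` of constant sectional curvature `+1`. -/
def Acurv0 (x y z v : V4) : ℝ := nip y z * nip x v - nip x z * nip y v

/-- The curvature tensor `A^Ψ` of a skew-adjoint endomorphism `Ψ`. -/
def AcurvPsi (Ψ : Matrix (Fin 4) (Fin 4) ℝ) (x y z v : V4) : ℝ :=
  nip (Ψ.mulVec y) z * nip (Ψ.mulVec x) v - nip (Ψ.mulVec x) z * nip (Ψ.mulVec y) v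
    - 2 * nip (Ψ.mulVec x) y * nip (Ψ.mulVec z) v

/-- Skew-adjoint with respect to the neutral inner product. -/
def SkewAdjointM (Ψ : Matrix (Fin 4) (Fin 4) ℝ) : Prop :=
  ∀ x y : V4, nip (Ψ.mulVec x) y = - nip x (Ψ.mulVec y)

/-- An orthogonal complex structure: skew-adjoint with `J² = −id`. -/
def OrthComplexStructure (J : Matrix (Fin 4) (Fin 4) ℝ) : Prop :=
  SkewAdjointM J ∧ J * J = -1

/-- An adapted paracomplex structure: skew-adjoint with `P² = id`. -/
def AdaptedParaStructure (P : Matrix (Fin 4) (Fin 4) ℝ) : Prop :=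
  SkewAdjointM P ∧ P * P = 1

/-- A paraquaternionic structure. -/
def Paraquaternionic (P₁ P₂ P₃ : Matrix (Fin 4) (Fin 4) ℝ) : Prop :=
  SkewAdjointM P₁ ∧ SkewAdjointM P₂ ∧ SkewAdjointM P₃ ∧
  P₁ * P₁ = -1 ∧ P₂ * P₂ = 1 ∧ P₃ * P₃ = 1 ∧
  P₁ * P₂ + P₂ * P₁ = 0 ∧ P₁ * P₃ + P₃ * P₁ = 0 ∧ P₂ * P₃ + P₃ * P₂ = 0

/-- The standard paraquaternionic structure: `Ψ₁`. -/
def psi1 : Matrix (Fin 4) (Fin 4) ℝ :=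
  !![0, 1, 0, 0; -1, 0, 0, 0; 0, 0, 0, -1; 0, 0, 1, 0]

/-- The standard paraquaternionic structure: `Ψ₂`. -/
def psi2 : Matrix (Fin 4) (Fin 4) ℝ :=
  !![0, 0, 1, 0; 0, 0, 0, 1; 1, 0, 0, 0; 0, 1, 0, 0]

/-- The standard paraquaternionic structure: `Ψ₃`. -/
def psi3 : Matrix (Fin 4) (Fin 4) ℝ :=
  !![0, 0, 0, 1; 0, 0, -1, 0; 0, -1, 0, 0; 1, 0, 0, 0]

/-- The curvature tensor `A_{κ₀,ξ}` of the Gilkey–Ivanova ansatz. -/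
noncomputable def AKxi (κ₀ ξ11 ξ12 ξ13 ξ22 ξ23 ξ33 : ℝ) : V4 → V4 → V4 → V4 → ℝ :=
  fun x y z w =>
    κ₀ * Acurv0 x y z w + (1/3) *
      (ξ11 * AcurvPsi psi1 x y z w + ξ22 * AcurvPsi psi2 x y z w
        + ξ33 * AcurvPsi psi3 x y z w + ξ12 * AcurvPsi (psi1 + psi2) x y z w
        + ξ13 * AcurvPsi (psi1 + psi3) x y z w + ξ23 * AcurvPsi (psi2 + psi3) x y z w)

/-- The `3 × 3` matrix `𝒥_{κ₀,ξ}`. -/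
def Jmat (κ₀ ξ11 ξ12 ξ13 ξ22 ξ23 ξ33 : ℝ) : Matrix (Fin 3) (Fin 3) ℝ :=
  κ₀ • (1 : Matrix (Fin 3) (Fin 3) ℝ) +
    !![ξ11 + ξ12 + ξ13, -ξ12, -ξ13;
       ξ12, -ξ22 - ξ12 - ξ23, -ξ23;
       ξ13, -ξ23, -ξ33 - ξ13 - ξ23]

/-- An oriented orthonormal basis of `(V,⟨·,·⟩)`: `b₁, b₂` timelike, `b₃, b₄` spacelike,
mutually orthogonal, with positively-oriented change-of-basis matrix. -/
def OrientedONB (b : Fin 4 → V4) : Prop :=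
  (∀ i j : Fin 4, nip (b i) (b j) = if i = j then eps i else 0) ∧
  0 < (Matrix.of fun i j : Fin 4 => b j i).det

/-!
`J_A(t v) = t² J_A(v)`, so for spacelike `v` the Jacobi operator is `⟨v,v⟩` times the Jacobi
operator of a unit spacelike vector, whose characteristic polynomial is fixed. Since `Tr(M^j)` is
the `j`-th power sum of the roots of the characteristic polynomial of `M` (its generalized
eigenvalues, counted with multiplicity), `Tr(J_A(v)^j) = c_j ⟨v,v⟩^j` on the open cone of spacelike
vectors. Both sides are polynomial in `v`, so the identity extends to all of `V` by analytic
continuation, null vectors included.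
-/

open Module

namespace Module.End

variable {K V : Type*} [Field K] [AddCommGroup V] [Module K V] [FiniteDimensional K V]

/- On the generalized eigenspace of `μ`, `f` is `μ` plus a nilpotent commuting with `f ^ j`, so
each further factor of `f` multiplies the trace by `μ`. -/
lemma trace_pow_restrict_maxGenEigenspace (f : End K V) (μ : K) (j : ℕ) :
    LinearMap.trace K _ ((f ^ j).restrict
        (f.mapsTo_maxGenEigenspace_of_comm (Commute.self_pow f j) μ)) =
      finrank K (f.maxGenEigenspace μ) * μ ^ j := by
  induction j with
  | zero =>
    rw [pow_zero μ, mul_one, ← LinearMap.trace_id]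
    congr 1
  | succ j ih =>
    have h_split : (f ^ (j + 1)).restrict
          (f.mapsTo_maxGenEigenspace_of_comm (Commute.self_pow f (j + 1)) μ) =
        (f ^ j).restrict (f.mapsTo_maxGenEigenspace_of_comm (Commute.self_pow f j) μ) ∘ₗ
          f.restrict (f.mapsTo_maxGenEigenspace_of_comm rfl μ) := by
      ext
      simp only [pow_succ]
      rfl
    rw [h_split, LinearMap.trace_comp_eq_mul_of_commute_of_isNilpotent μ
        (LinearMap.restrict_commute (Commute.pow_self f j) _ _)
        (f.isNilpotent_restrict_maxGenEigenspace_sub_algebraMap μ), ih]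
    ring

open Polynomial in
theorem trace_pow_eq_sum_roots_charpoly [IsAlgClosed K] (f : End K V) (j : ℕ) :
    LinearMap.trace K V (f ^ j) = (f.charpoly.roots.map (· ^ j)).sum := by
  classical
  have h_int := DirectSum.isInternal_submodule_of_iSupIndep_of_iSup_eq_top
    f.independent_maxGenEigenspace f.iSup_maxGenEigenspace_eq_top
  have h_fin : {μ | f.maxGenEigenspace μ ≠ ⊥}.Finite :=
    WellFoundedGT.finite_ne_bot_of_iSupIndep f.independent_maxGenEigenspace
  have h_support : h_fin.toFinset = f.charpoly.roots.toFinset := by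
    ext μ
    rw [Set.Finite.mem_toFinset, Set.mem_ofPred_eq, Multiset.mem_toFinset,
      mem_roots f.charpoly_monic.ne_zero, ← rootMultiplicity_pos f.charpoly_monic.ne_zero,
      ← LinearMap.finrank_maxGenEigenspace_eq, Nat.pos_iff_ne_zero, Ne, Ne,
      Submodule.finrank_eq_zero]
  rw [LinearMap.trace_eq_sum_trace_restrict' h_int h_fin
      (fun μ => f.mapsTo_maxGenEigenspace_of_comm (Commute.self_pow f j) μ),
    h_support, Finset.sum_multiset_map_count]
  refine Finset.sum_congr rfl fun μ _ => ?_
  rw [trace_pow_restrict_maxGenEigenspace, LinearMap.finrank_maxGenEigenspace_eq, count_roots,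
    nsmul_eq_mul]

end Module.End

namespace Matrix

section Charpoly

variable {K n : Type*} [Field K] [Fintype n] [DecidableEq n]

theorem trace_pow_eq_sum_roots_charpoly [IsAlgClosed K] (M : Matrix n n K) (j : ℕ) :
    (M ^ j).trace = (M.charpoly.roots.map (· ^ j)).sum := by
  rw [← trace_toLin'_eq, toLin'_pow, Module.End.trace_pow_eq_sum_roots_charpoly, charpoly_toLin']

theorem trace_pow_eq_of_charpoly_eq {M N : Matrix n n K} (h : M.charpoly = N.charpoly) (j : ℕ) :
    (M ^ j).trace = (N ^ j).trace := by
  let ι := algebraMap K (AlgebraicClosure K)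
  have h_roots (P : Matrix n n K) :
      ι (P ^ j).trace = ((P.charpoly.map ι).roots.map (· ^ j)).sum := by
    rw [AddMonoidHom.map_trace, Matrix.map_pow, trace_pow_eq_sum_roots_charpoly, charpoly_map]
  exact ι.injective <| by rw [h_roots, h_roots, h]

end Charpoly

section Analytic

variable {𝕜 E n : Type*} [NontriviallyNormedField 𝕜] [NormedAddCommGroup E] [NormedSpace 𝕜 E]
  [Fintype n] [DecidableEq n] {F : E → Matrix n n 𝕜} {s : Set E}

lemma analyticOnNhd_pow_apply (hF : ∀ i k, AnalyticOnNhd 𝕜 (fun x => F x i k) s) (j : ℕ)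
    (i k : n) : AnalyticOnNhd 𝕜 (fun x => (F x ^ j) i k) s := by
  induction j generalizing i k with
  | zero =>
    simp only [pow_zero]
    exact analyticOnNhd_const
  | succ j ih =>
    simp only [pow_succ, mul_apply]
    exact Finset.analyticOnNhd_fun_sum _ fun l _ => (ih i l).mul (hF l k)

lemma analyticOnNhd_trace_pow (hF : ∀ i k, AnalyticOnNhd 𝕜 (fun x => F x i k) s) (j : ℕ) :
    AnalyticOnNhd 𝕜 (fun x => (F x ^ j).trace) s :=
  Finset.analyticOnNhd_fun_sum _ fun i _ => analyticOnNhd_pow_apply hF j i i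

end Analytic

end Matrix

lemma sum_smul_stdb (v : V4) : ∑ a, v a • stdb a = v := by
  funext i
  simp [stdb]

lemma nip_smul_smul (t : ℝ) (v : V4) : nip (t • v) (t • v) = t ^ 2 * nip v v := by
  simp only [nip, Pi.smul_apply, smul_eq_mul]
  ring

lemma nip_stdb_two : nip (stdb 2) (stdb 2) = 1 := by
  simp [nip, stdb]

open scoped ContDiff in
lemma analyticOnNhd_mul_nip_self_pow (c : ℝ) (j : ℕ) :
    AnalyticOnNhd ℝ (fun v => c * nip v v ^ j) Set.univ :=
  ContDiff.analyticOnNhd (by unfold nip; fun_prop)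

lemma isOpen_setOf_nip_self_pos : IsOpen {v : V4 | 0 < nip v v} :=
  isOpen_lt continuous_const (by unfold nip; fun_prop)

namespace IsMultilinear

variable {A : V4 → V4 → V4 → V4 → ℝ}

lemma map_zero_second (hA : IsMultilinear A) (x z w : V4) : A x 0 z w = 0 := by
  simpa using hA.2.1 1 x 0 0 z w

lemma map_zero_third (hA : IsMultilinear A) (x y w : V4) : A x y 0 w = 0 := by
  simpa using hA.2.2.1 1 x y 0 0 w

@[simps]
def secondSlot (hA : IsMultilinear A) (x z w : V4) : V4 →ₗ[ℝ] ℝ where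
  toFun y := A x y z w
  map_add' y y' := by simpa using hA.2.1 1 x y y' z w
  map_smul' c y := by simpa [hA.map_zero_second] using hA.2.1 c x y 0 z w

@[simps]
def thirdSlot (hA : IsMultilinear A) (x y w : V4) : V4 →ₗ[ℝ] ℝ where
  toFun z := A x y z w
  map_add' z z' := by simpa using hA.2.2.1 1 x y z z' w
  map_smul' c z := by simpa [hA.map_zero_third] using hA.2.2.1 c x y z 0 w

lemma jacobi_smul (hA : IsMultilinear A) (t : ℝ) (v : V4) :
    jacobi A (t • v) = t ^ 2 • jacobi A v := by
  ext i k
  have h_second := (hA.secondSlot (stdb k) (t • v) (stdb i)).map_smul t v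
  have h_third := (hA.thirdSlot (stdb k) v (stdb i)).map_smul t v
  simp only [secondSlot_apply, thirdSlot_apply, smul_eq_mul] at h_second h_third
  simp only [jacobi, of_apply, Matrix.smul_apply, smul_eq_mul, h_second, h_third]
  ring

lemma jacobi_apply_eq_sum (hA : IsMultilinear A) (v : V4) (i k : Fin 4) :
    jacobi A v i k = eps i * ∑ a, v a * hA.thirdSlot (stdb k) (stdb a) (stdb i) v := by
  calc jacobi A v i k = eps i * hA.secondSlot (stdb k) v (stdb i) (∑ a, v a • stdb a) := by
        rw [sum_smul_stdb]; rfl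
    _ = _ := by simp only [map_sum, map_smul, smul_eq_mul]; rfl

lemma analyticOnNhd_jacobi_apply (hA : IsMultilinear A) (i k : Fin 4) :
    AnalyticOnNhd ℝ (fun v => jacobi A v i k) Set.univ := by
  simp only [hA.jacobi_apply_eq_sum]
  exact analyticOnNhd_const.mul <| Finset.analyticOnNhd_fun_sum _ fun a _ =>
    (ContinuousLinearMap.proj a).analyticOnNhd _ |>.mul <|
      (LinearMap.toContinuousLinearMap (hA.thirdSlot _ _ _)).analyticOnNhd _

end IsMultilinear

lemma SpacelikeOsserman.trace_jacobi_pow_eq {A : V4 → V4 → V4 → V4 → ℝ} (h : SpacelikeOsserman A)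
    (hA : IsMultilinear A) (j : ℕ) {u v : V4} (hu : nip u u = 1) (hv : 0 < nip v v) :
    (jacobi A v ^ j).trace = (jacobi A u ^ j).trace * nip v v ^ j := by
  set s := nip v v
  set w := (Real.sqrt s)⁻¹ • v
  have hw : nip w w = 1 := by
    rw [nip_smul_smul, inv_pow, Real.sq_sqrt hv.le, inv_mul_cancel₀ hv.ne']
  have hvw : v = Real.sqrt s • w := by
    rw [smul_smul, mul_inv_cancel₀ (Real.sqrt_pos.mpr hv).ne', one_smul]
  rw [hvw, hA.jacobi_smul, Real.sq_sqrt hv.le, smul_pow, Matrix.trace_smul, smul_eq_mul,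
    Matrix.trace_pow_eq_of_charpoly_eq (h w u hw hu), mul_comm]

/-- For a spacelike Osserman model, `Tr(J_A(v)^j) = c_j ⟨v,v⟩^j` for all `v`;
in particular the traces of powers of the Jacobi operator vanish on null vectors. -/
theorem trace_jacobi_power_eq (A : V4 → V4 → V4 → V4 → ℝ)
    (hA : IsModel A) (h : SpacelikeOsserman A) :
    ∀ j : ℕ, 0 < j → ∃ c : ℝ,
      (∀ v : V4, Matrix.trace ((jacobi A v) ^ j) = c * (nip v v) ^ j) ∧
      (∀ v : V4, nip v v = 0 → Matrix.trace ((jacobi A v) ^ j) = 0) := by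
  intro j hj
  set c := (jacobi A (stdb 2) ^ j).trace
  have h_spacelike : ∀ v ∈ {v : V4 | 0 < nip v v}, (jacobi A v ^ j).trace = c * nip v v ^ j :=
    fun v hv => h.trace_jacobi_pow_eq hA.1 j nip_stdb_two hv
  have h_near : (fun v => (jacobi A v ^ j).trace) =ᶠ[nhds (stdb 2)] fun v => c * nip v v ^ j :=
    Filter.eventuallyEq_of_mem (isOpen_setOf_nip_self_pos.mem_nhds (by simp [nip_stdb_two]))
      h_spacelike
  have h_all : ∀ v : V4, (jacobi A v ^ j).trace = c * nip v v ^ j := fun v =>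
    (Matrix.analyticOnNhd_trace_pow hA.1.analyticOnNhd_jacobi_apply j
      |>.eqOn_of_preconnected_of_eventuallyEq (analyticOnNhd_mul_nip_self_pow c j)
        isPreconnected_univ (Set.mem_univ _) h_near) (Set.mem_univ v)
  exact ⟨c, h_all, fun v hv => by rw [h_all, hv, zero_pow hj.ne', mul_zero]⟩
end

section
/- Let P be an adapted paracomplex structure on (V,⟨·,·⟩), let κ₀ ≠ 0 and κ_P ≠ 0, and let A = κ₀A⁰ + κ_PA^P. Then the model 𝔐 = (V,⟨·,·⟩,A) is not null Jordan Osserman; indeed there exist nonzero null vectors u, v with rank(J_A(u)) ≤ 1 and rank(J_A(v)) = 2 (for the standard adapted paracomplex structure one may take u with Pu = u, e.g. u = e₁ + Pe₁, and v = e₁ + e₄). -/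
open Matrix BigOperators

/-!
For a null vector `x` the Jacobi operator of `κ₀A⁰ + κA^Ψ` (`Ψ` skew-adjoint) is
`y ↦ -κ₀⟨x,y⟩x + 3κ⟨Ψx,y⟩Ψx`, so its image lies in `span {x, Ψx}`.
The `±1`-eigenspaces `E±` of an adapted paracomplex structure `P` are totally isotropic and
paired nondegenerately by `⟨·,·⟩`. A nonzero `u ∈ E₊` is null and `J(u)` has image in `ℝu`,
so rank `≤ 1`. For `w ∈ E₋` orthogonal to `u`, `v = u + w` is null, and vectors of `E∓` dual to
`u, w` show that `v` and `Pv = u - w` are independent and both in the image of `J(v)`, so its rank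
is `2`. Similar operators have equal rank.
-/

lemma nip_comm (x y : V4) : nip x y = nip y x := by
  unfold nip; ring

@[simp] lemma nip_add_left (x y z : V4) : nip (x + y) z = nip x z + nip y z := by
  simp only [nip, Pi.add_apply]; ring

@[simp] lemma nip_add_right (x y z : V4) : nip x (y + z) = nip x y + nip x z := by
  simp only [nip, Pi.add_apply]; ring

@[simp] lemma nip_sub_left (x y z : V4) : nip (x - y) z = nip x z - nip y z := by
  simp only [nip, Pi.sub_apply]; ring

@[simp] lemma nip_sub_right (x y z : V4) : nip x (y - z) = nip x y - nip x z := by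
  simp only [nip, Pi.sub_apply]; ring

@[simp] lemma nip_neg_left (x y : V4) : nip (-x) y = -nip x y := by
  simp only [nip, Pi.neg_apply]; ring

@[simp] lemma nip_neg_right (x y : V4) : nip x (-y) = -nip x y := by
  simp only [nip, Pi.neg_apply]; ring

@[simp] lemma nip_smul_left (c : ℝ) (x y : V4) : nip (c • x) y = c * nip x y := by
  simp only [nip, Pi.smul_apply, smul_eq_mul]; ring

@[simp] lemma nip_smul_right (c : ℝ) (x y : V4) : nip x (c • y) = c * nip x y := by
  simp only [nip, Pi.smul_apply, smul_eq_mul]; ring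

lemma nip_stdb (x : V4) (i : Fin 4) : nip x (stdb i) = eps i * x i := by
  fin_cases i <;> simp [nip, stdb, eps]

lemma stdb_eq_single (i : Fin 4) : stdb i = Pi.single i 1 := by
  ext j
  simp [stdb, Pi.single_apply]

lemma eps_mul_self (i : Fin 4) : eps i * eps i = 1 := by
  fin_cases i <;> norm_num [eps]

def nipForm : LinearMap.BilinForm ℝ V4 :=
  LinearMap.mk₂ ℝ nip nip_add_left nip_smul_left nip_add_right nip_smul_right

@[simp] lemma nipForm_apply (x y : V4) : nipForm x y = nip x y := rfl

lemma jacobi_mulVec_eq {A : V4 → V4 → V4 → V4 → ℝ} {x : V4} (K : V4 →ₗ[ℝ] V4)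
    (hK : ∀ y z, A y x x z = nip (K y) z) (y : V4) : jacobi A x *ᵥ y = K y := by
  suffices jacobi A x = LinearMap.toMatrix' K by rw [this, LinearMap.toMatrix'_mulVec]
  ext i j
  rw [jacobi, of_apply, hK, nip_stdb, ← mul_assoc, eps_mul_self, one_mul,
    LinearMap.toMatrix'_apply, stdb_eq_single]

lemma Similar4.rank_eq {M N : Matrix (Fin 4) (Fin 4) ℝ} (h : Similar4 M N) : M.rank = N.rank := by
  obtain ⟨L, hL, hML⟩ := h
  rw [← rank_mul_eq_left_of_isUnit_det L M hL, hML, rank_mul_eq_right_of_isUnit_det L N hL]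

section Rank

variable {K m n : Type*} [Field K] [Fintype n] {M : Matrix m n K}

lemma Matrix.rank_le_one_of_mulVec_mem_span {u : m → K} (h : ∀ y, M *ᵥ y ∈ K ∙ u) :
    M.rank ≤ 1 := by
  have hle : LinearMap.range M.mulVecLin ≤ K ∙ u := by
    rintro _ ⟨y, rfl⟩
    exact h y
  calc M.rank ≤ Module.finrank K (K ∙ u) := Submodule.finrank_mono hle
    _ ≤ 1 := by simpa using finrank_span_le_card ({u} : Set (m → K))

lemma Matrix.rank_eq_two_of_range {p q : m → K} (hpq : LinearIndependent K ![p, q])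
    (hrange : ∀ y, M *ᵥ y ∈ Submodule.span K {p, q}) (hp : ∃ y, M *ᵥ y = p)
    (hq : ∃ y, M *ᵥ y = q) : M.rank = 2 := by
  have hspan : LinearMap.range M.mulVecLin = Submodule.span K (Set.range ![p, q]) := by
    rw [range_cons_cons_empty]
    apply le_antisymm
    · rintro _ ⟨y, rfl⟩
      exact hrange y
    · obtain ⟨yp, rfl⟩ := hp
      obtain ⟨yq, rfl⟩ := hq
      rw [Submodule.span_le]
      rintro _ (rfl | rfl) <;> exact ⟨_, rfl⟩
  rw [Matrix.rank, hspan, finrank_span_eq_card hpq, Fintype.card_fin]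

end Rank

lemma LinearIndependent.pair_of_dual {K M : Type*} [Field K] [AddCommGroup M] [Module K M]
    {p q : M} (f g : M →ₗ[K] K) (hfp : f p = 1) (hfq : f q = 0) (hgp : g p = 0) (hgq : g q = 1) :
    LinearIndependent K ![p, q] := by
  rw [LinearIndependent.pair_iff]
  intro s t hst
  have hf := congrArg f hst
  have hg := congrArg g hst
  simp only [map_add, map_smul, hfp, hfq, hgp, hgq, smul_eq_mul, mul_one, mul_zero, add_zero,
    zero_add, map_zero] at hf hg
  exact ⟨hf, hg⟩

def AcurvSum (κ₀ κ : ℝ) (Ψ : Matrix (Fin 4) (Fin 4) ℝ) (x y z v : V4) : ℝ :=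
  κ₀ * Acurv0 x y z v + κ * AcurvPsi Ψ x y z v

namespace SkewAdjointM

variable {Ψ : Matrix (Fin 4) (Fin 4) ℝ} (hΨ : SkewAdjointM Ψ)
include hΨ

lemma nip_mulVec_self (x : V4) : nip (Ψ *ᵥ x) x = 0 := by
  have h := hΨ x x
  rw [nip_comm x] at h
  linarith

lemma nip_eq_zero_of_mulVec_eq_self {a b : V4} (ha : Ψ *ᵥ a = a) (hb : Ψ *ᵥ b = b) :
    nip a b = 0 := by
  have h := hΨ a b
  rw [ha, hb] at h
  linarith

lemma nip_eq_zero_of_mulVec_eq_neg {a b : V4} (ha : Ψ *ᵥ a = -a) (hb : Ψ *ᵥ b = -b) :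
    nip a b = 0 := by
  have h := hΨ a b
  rw [ha, hb, nip_neg_left, nip_neg_right, neg_neg] at h
  linarith

lemma AcurvSum_eq_nip (κ₀ κ : ℝ) {x : V4} (hx : nip x x = 0) (y z : V4) :
    AcurvSum κ₀ κ Ψ y x x z
      = nip ((-κ₀ * nip x y) • x + (3 * κ * nip (Ψ *ᵥ x) y) • (Ψ *ᵥ x)) z := by
  have hyx : nip (Ψ *ᵥ y) x = -nip (Ψ *ᵥ x) y := by rw [hΨ, nip_comm]
  simp only [AcurvSum, Acurv0, AcurvPsi, nip_add_left, nip_smul_left, hx, hΨ.nip_mulVec_self,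
    hyx, nip_comm y x]
  ring

lemma jacobi_AcurvSum_mulVec (κ₀ κ : ℝ) {x : V4} (hx : nip x x = 0) (y : V4) :
    jacobi (AcurvSum κ₀ κ Ψ) x *ᵥ y
      = (-κ₀ * nip x y) • x + (3 * κ * nip (Ψ *ᵥ x) y) • (Ψ *ᵥ x) := by
  rw [jacobi_mulVec_eq ((-κ₀) • (nipForm x).smulRight x
      + (3 * κ) • (nipForm (Ψ *ᵥ x)).smulRight (Ψ *ᵥ x))
    (fun y z => by simpa [smul_smul] using hΨ.AcurvSum_eq_nip κ₀ κ hx y z)]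
  simp [smul_smul]

lemma rank_jacobi_AcurvSum_le_one (κ₀ κ : ℝ) {u : V4} (hu : Ψ *ᵥ u = u) :
    (jacobi (AcurvSum κ₀ κ Ψ) u).rank ≤ 1 := by
  refine Matrix.rank_le_one_of_mulVec_mem_span (u := u) fun y => ?_
  rw [hΨ.jacobi_AcurvSum_mulVec κ₀ κ (hΨ.nip_eq_zero_of_mulVec_eq_self hu hu), hu, ← add_smul]
  exact Submodule.smul_mem _ _ (Submodule.mem_span_singleton_self u)

lemma rank_jacobi_AcurvSum_eq_two {κ₀ κ : ℝ} (hκ₀ : κ₀ ≠ 0) (hκ : κ ≠ 0) {v y₁ y₂ : V4}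
    (hv : nip v v = 0) (h₁ : nip v y₁ = 1) (h₂ : nip (Ψ *ᵥ v) y₁ = 0) (h₃ : nip v y₂ = 0)
    (h₄ : nip (Ψ *ᵥ v) y₂ = 1) :
    (jacobi (AcurvSum κ₀ κ Ψ) v).rank = 2 := by
  have hJ := hΨ.jacobi_AcurvSum_mulVec κ₀ κ hv
  refine Matrix.rank_eq_two_of_range
    (.pair_of_dual (nipForm.flip y₁) (nipForm.flip y₂) (by simpa) (by simpa) (by simpa)
      (by simpa)) (fun y => ?_) ⟨(-κ₀)⁻¹ • y₁, ?_⟩ ⟨(3 * κ)⁻¹ • y₂, ?_⟩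
  · rw [hJ]
    exact Submodule.add_mem _ (Submodule.smul_mem _ _ (Submodule.subset_span (by simp)))
      (Submodule.smul_mem _ _ (Submodule.subset_span (by simp)))
  · rw [hJ, nip_smul_right, nip_smul_right, h₁, h₂]
    simp [hκ₀]
  · rw [hJ, nip_smul_right, nip_smul_right, h₃, h₄, mul_one, mul_inv_cancel₀ (by positivity)]
    simp

end SkewAdjointM

namespace AdaptedParaStructure

variable {P : Matrix (Fin 4) (Fin 4) ℝ} (hP : AdaptedParaStructure P)
include hP

lemma mulVec_mulVec_self (x : V4) : P *ᵥ (P *ᵥ x) = x := by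
  rw [mulVec_mulVec, hP.2, one_mulVec]

lemma mulVec_add_self (x : V4) : P *ᵥ (x + P *ᵥ x) = x + P *ᵥ x := by
  rw [mulVec_add, hP.mulVec_mulVec_self, add_comm]

lemma mulVec_sub_self (x : V4) : P *ᵥ (x - P *ᵥ x) = -(x - P *ᵥ x) := by
  rw [mulVec_sub, hP.mulVec_mulVec_self, neg_sub]

lemma nip_add_self_sub_self (x y : V4) :
    nip (x + P *ᵥ x) (y - P *ᵥ y) = 2 * nip (x + P *ᵥ x) y := by
  rw [nip_sub_right, sub_eq_add_neg, ← hP.1, hP.mulVec_add_self]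
  ring

lemma exists_eigenframe : ∃ u w z₁ z₂ : V4, P *ᵥ u = u ∧ P *ᵥ w = -w ∧ P *ᵥ z₁ = -z₁ ∧
    P *ᵥ z₂ = z₂ ∧ nip u w = 0 ∧ nip u z₁ = 1 ∧ nip w z₂ = 1 := by
  set e := stdb 2
  set u := e + P *ᵥ e
  set s := nip u (stdb 3)
  -- `⟨u, e⟩ = 1` makes `x ⊥ u`, while `⟨x, x⟩ = 1 + s² ≠ 0`
  set x := stdb 3 - s • e
  have hee : nip e e = 1 := by simp [e, nip, stdb]
  have he₄ : nip e (stdb 3) = 0 := by simp [e, nip, stdb]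
  have h₄₄ : nip (stdb 3) (stdb 3) = 1 := by simp [nip, stdb]
  have hue : nip u e = 1 := by simp [u, hee, hP.1.nip_mulVec_self]
  have hux : nip u x = 0 := by simp [x, s, hue]
  have hxx : nip x x = 1 + s ^ 2 := by
    simp only [x, nip_sub_left, nip_sub_right, nip_smul_left, nip_smul_right, hee, he₄, h₄₄,
      nip_comm (stdb 3) e]
    ring
  have hxx' : nip (x + P *ᵥ x) x = 1 + s ^ 2 := by simp [hxx, hP.1.nip_mulVec_self]
  refine ⟨u, x - P *ᵥ x, (1 / 2 : ℝ) • (e - P *ᵥ e), (2 * (1 + s ^ 2))⁻¹ • (x + P *ᵥ x),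
    hP.mulVec_add_self e, hP.mulVec_sub_self x, ?_, ?_, ?_, ?_, ?_⟩
  · rw [mulVec_smul, hP.mulVec_sub_self, smul_neg]
  · rw [mulVec_smul, hP.mulVec_add_self]
  · rw [hP.nip_add_self_sub_self, hux, mul_zero]
  · rw [nip_smul_right, hP.nip_add_self_sub_self, hue]
    norm_num
  · rw [nip_smul_right, nip_comm, hP.nip_add_self_sub_self, hxx']
    field_simp

lemma exists_null_dual_pair : ∃ v y₁ y₂ : V4, nip v v = 0 ∧ nip v y₁ = 1 ∧
    nip (P *ᵥ v) y₁ = 0 ∧ nip v y₂ = 0 ∧ nip (P *ᵥ v) y₂ = 1 := by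
  obtain ⟨u, w, z₁, z₂, hu, hw, hz₁, hz₂, huw, huz₁, hwz₂⟩ := hP.exists_eigenframe
  have huu := hP.1.nip_eq_zero_of_mulVec_eq_self hu hu
  have huz₂ := hP.1.nip_eq_zero_of_mulVec_eq_self hu hz₂
  have hww := hP.1.nip_eq_zero_of_mulVec_eq_neg hw hw
  have hwz₁ := hP.1.nip_eq_zero_of_mulVec_eq_neg hw hz₁
  have hPv : P *ᵥ (u + w) = u - w := by rw [mulVec_add, hu, hw, sub_eq_add_neg]
  refine ⟨u + w, (1 / 2 : ℝ) • (z₁ + z₂), (1 / 2 : ℝ) • (z₁ - z₂), ?_, ?_, ?_, ?_, ?_⟩ <;>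
    simp only [hPv, nip_add_left, nip_sub_left, nip_add_right, nip_sub_right, nip_smul_right,
      nip_comm w u, huu, huz₂, hww, hwz₁, huw, huz₁, hwz₂] <;> norm_num

lemma exists_mulVec_eq_self : ∃ u : V4, u ≠ 0 ∧ P *ᵥ u = u := by
  obtain ⟨u, -, z₁, -, hu, -, -, -, -, huz₁, -⟩ := hP.exists_eigenframe
  exact ⟨u, by rintro rfl; simp [nip] at huz₁, hu⟩

end AdaptedParaStructure

/-- Section 3.4: for `A = κ₀A⁰ + κ_P A^P` with `P` an adapted paracomplex structure,
`κ₀ ≠ 0` and `κ_P ≠ 0`, the model is not null Jordan Osserman: there are nonzero null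
vectors `u, v` with `rank J_A(u) ≤ 1` and `rank J_A(v) = 2`. -/
theorem paracomplex_not_null_jordan_osserman (P : Matrix (Fin 4) (Fin 4) ℝ)
    (hP : AdaptedParaStructure P) (κ₀ κP : ℝ) (hκ₀ : κ₀ ≠ 0) (hκP : κP ≠ 0)
    (A : V4 → V4 → V4 → V4 → ℝ)
    (hA : A = fun x y z w => κ₀ * Acurv0 x y z w + κP * AcurvPsi P x y z w) :
    (¬ NullJordanOsserman A) ∧
    ∃ u v : V4, u ≠ 0 ∧ v ≠ 0 ∧ nip u u = 0 ∧ nip v v = 0 ∧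
      (jacobi A u).rank ≤ 1 ∧ (jacobi A v).rank = 2 := by
  replace hA : A = AcurvSum κ₀ κP P := hA
  subst hA
  obtain ⟨u, hu0, hPu⟩ := hP.exists_mulVec_eq_self
  obtain ⟨v, y₁, y₂, hv, h₁, h₂, h₃, h₄⟩ := hP.exists_null_dual_pair
  have hv0 : v ≠ 0 := by rintro rfl; simp [nip] at h₁
  have hu := hP.1.nip_eq_zero_of_mulVec_eq_self hPu hPu
  have hrank_u := hP.1.rank_jacobi_AcurvSum_le_one κ₀ κP hPu
  have hrank_v := hP.1.rank_jacobi_AcurvSum_eq_two hκ₀ hκP hv h₁ h₂ h₃ h₄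
  refine ⟨fun hN => ?_, u, v, hu0, hv0, hu, hv, hrank_u, hrank_v⟩
  have := (hN u v hu0 hv0 hu hv).rank_eq
  omega
end
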